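/- Let H be a real inner product space, q ∈ ℕ, a : Fin q → Fin q → ℝ, b : Fin q → ℝ, τ ∈ ℝ, and let E′, Q : Fin q → H. Define E : Fin q → H by E(r) = τ·Σ_{s} a(r,s)·E′(s) − Q(r). Then ‖τ·Σ_{r} b(r)·E′(r)‖² = 2τ·Σ_{r} b(r)·⟨E′(r), E(r) + Q(r)⟩ − τ²·Σ_{r}Σ_{s} (a(r,s)·b(r) + a(s,r)·b(s) − b(r)·b(s))·⟨E′(r), E′(s)⟩. -/
import Mathlib


open scoped RealInnerProductSpace

/-- Runge–Kutta energy identity: with stage errors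
`E r = τ Σ_s a r s • E' s − Q r`, one has
`‖τ Σ_r b r • E' r‖² = 2τ Σ_r b r ⟪E' r, E r + Q r⟫
  − τ² Σ_{r,s} (a r s b r + a s r b s − b r b s) ⟪E' r, E' s⟫`. -/
theorem runge_kutta_energy_identity
    {H : Type*} [NormedAddCommGroup H] [InnerProductSpace ℝ H]
    (q : ℕ) (a : Fin q → Fin q → ℝ) (b : Fin q → ℝ) (τ : ℝ)
    (E' Q E : Fin q → H)
    (hE : ∀ r, E r = τ • (∑ s, a r s • E' s) - Q r) :
    ‖τ • ∑ r, b r • E' r‖ ^ 2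
      = 2 * τ * ∑ r, b r * ⟪E' r, E r + Q r⟫
        - τ ^ 2 * ∑ r, ∑ s, (a r s * b r + a s r * b s - b r * b s) * ⟪E' r, E' s⟫ := by
  have key : ∀ r, E r + Q r = τ • (∑ s, a r s • E' s) := fun r => by rw [hE]; abel
  simp only [key]
  rw [← real_inner_self_eq_norm_sq]
  simp only [real_inner_smul_left, real_inner_smul_right, sum_inner, inner_sum,
    Finset.mul_sum, Finset.sum_mul]
  have hswap : ∑ r, ∑ s, a s r * b s * ⟪E' r, E' s⟫
      = ∑ r, ∑ s, a r s * b r * ⟪E' r, E' s⟫ := by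
    rw [Finset.sum_comm]
    exact Finset.sum_congr rfl fun r _ => Finset.sum_congr rfl fun s _ => by
      rw [real_inner_comm]
  have expand : ∑ r, ∑ s, (a r s * b r + a s r * b s - b r * b s) * ⟪E' r, E' s⟫
      = ∑ r, ∑ s, a r s * b r * ⟪E' r, E' s⟫ + ∑ r, ∑ s, a s r * b s * ⟪E' r, E' s⟫
        - ∑ r, ∑ s, b r * b s * ⟪E' r, E' s⟫ := by
    simp only [add_mul, sub_mul, Finset.sum_add_distrib, Finset.sum_sub_distrib]
  rw [← sub_eq_zero]
  simp only [← Finset.sum_sub_distrib]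
  have main : ∀ x i : Fin q, τ * (b x * (τ * (b i * ⟪E' i, E' x⟫)))
      - (2 * τ * (b x * (τ * (a x i * ⟪E' x, E' i⟫)))
        - τ ^ 2 * ((a x i * b x + a i x * b i - b x * b i) * ⟪E' x, E' i⟫))
      = τ ^ 2 * (a i x * b i * ⟪E' x, E' i⟫) - τ ^ 2 * (a x i * b x * ⟪E' x, E' i⟫) := by
    intro x i; rw [real_inner_comm (E' i)]; ring
  rw [Finset.sum_congr rfl fun x _ => Finset.sum_congr rfl fun i _ => main x i]
  simp only [Finset.sum_sub_distrib]
  rw [sub_eq_zero]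
  rw [Finset.sum_comm]
  exact Finset.sum_congr rfl fun x _ => Finset.sum_congr rfl fun i _ => by
    rw [real_inner_comm]
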